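/- Let h ≥ 2 and c ≥ 1 be integers. Assume that for every positive integer h' < h and every h'-regular pair (d';a') = (d_1',…,d_{c'}'; a_0',…,a_{n'}') with c' ≤ c, c' ≤ n' and a_i' ∤ h' for all i, one has δ(d';a') ≥ F^{h'}(a_0',…,a_{n'}'). Let (d;a) = (d_1,…,d_c; a_0,…,a_n) be an h-regular pair with c ≤ n and a_i ∤ h for all i, and suppose there exists a prime p dividing h such that δ̄(p) := δ(d;a) − δ(d(p);a(p)) ≥ 0 and the number of degrees divisible by p is strictly smaller than the number of weights divisible by p. Then δ(d;a) ≥ F^h(a_0,…,a_n). -/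

import Mathlib

/-!
Write `h = p * h'`. Dividing the degrees and weights divisible by `p` by `p` gives a pair
`(d(p)/p; a(p)/p)` that is `h'`-regular, has at least one degree (regularity applied to a single
weight of `a(p)`) and fewer degrees than weights, so the induction hypothesis bounds its amplitude
below by `F^{h'}(a(p)/p)`. Regularity applied to all of `a(p)`, for which fewer than `|a(p)|`
degrees are divisible by `p`, gives `gcd a(p) ∣ h`; hence every multiple of `h` that is not a
combination of `a` is `p` times a multiple of `h'` that is not a combination of `a(p)/p`. So
`F^h(a) ≤ p F^{h'}(a(p)/p) ≤ p δ(d(p)/p; a(p)/p) = δ(d(p); a(p)) ≤ δ(d; a)`.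
-/

open Finset

/-- The amplitude `δ` of the (sub)pair given by the degrees `d` indexed by `D`
and the weights `a` indexed by `A`. -/
def deltaOn {ι κ : Type*} (D : Finset ι) (d : ι → ℕ) (A : Finset κ) (a : κ → ℕ) : ℤ :=
  (∑ j ∈ D, (d j : ℤ)) - ∑ i ∈ A, (a i : ℤ)

def deltaPair {ι κ : Type*} [Fintype ι] [Fintype κ] (d : ι → ℕ) (a : κ → ℕ) : ℤ :=
  deltaOn univ d univ a

def IsHRegularOn {ι κ : Type*} (h : ℕ) (D : Finset ι) (d : ι → ℕ)
    (A : Finset κ) (a : κ → ℕ) : Prop :=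
  ∀ I : Finset κ, I ⊆ A → I.Nonempty → 1 < I.gcd a →
    (∃ P : Finset ι, P ⊆ D ∧ P.card = I.card ∧ ∀ j ∈ P, I.gcd a ∣ d j) ∨ I.gcd a ∣ h

def IsHRegularPair {ι κ : Type*} [Fintype ι] [Fintype κ] (h : ℕ) (d : ι → ℕ)
    (a : κ → ℕ) : Prop :=
  IsHRegularOn h univ d univ a

/-- The generalised `1/h`-Frobenius number `F^h` of the weights indexed by `A`.
Letting `g` be the gcd of the weights, this is the largest integer `z` divisible by
`lcm g h` that is not a nonnegative integral combination of the weights; this agrees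
with the renormalised definition `F^h = g * F^{h / gcd (g,h)} (a/g)`.  For `g = 1`
it is the largest multiple of `h` that is not a nonnegative integral combination of
the weights (so it equals `-h` if every positive multiple of `h` is such a combination),
and `frobOn 1 A a` is the ordinary Frobenius number `F` (so `F = -1` if some weight
equals `1`). -/
noncomputable def frobOn {κ : Type*} (h : ℕ) (A : Finset κ) (a : κ → ℕ) : ℤ :=
  sSup {z : ℤ | ((Nat.lcm (A.gcd a) h : ℕ) : ℤ) ∣ z ∧
    ¬ ∃ x : κ → ℕ, ((∑ i ∈ A, x i * a i : ℕ) : ℤ) = z}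

noncomputable def frobNum {κ : Type*} [Fintype κ] (h : ℕ) (a : κ → ℕ) : ℤ :=
  frobOn h univ a

section Frobenius

variable {κ : Type*}

def frobSet (h : ℕ) (A : Finset κ) (a : κ → ℕ) : Set ℤ :=
  {z : ℤ | ((Nat.lcm (A.gcd a) h : ℕ) : ℤ) ∣ z ∧
    ¬ ∃ x : κ → ℕ, ((∑ i ∈ A, x i * a i : ℕ) : ℤ) = z}

theorem frobOn_eq_sSup (h : ℕ) (A : Finset κ) (a : κ → ℕ) :
    frobOn h A a = sSup (frobSet h A a) := rfl

theorem exists_sum_mul_eq_of_mem_closure {A : Finset κ} {a : κ → ℕ} {m : ℕ}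
    (hm : m ∈ AddSubmonoid.closure (a '' A)) : ∃ x : κ → ℕ, ∑ i ∈ A, x i * a i = m := by
  classical
  induction hm using AddSubmonoid.closure_induction with
  | mem m hm =>
    obtain ⟨i, hi, rfl⟩ := hm
    exact ⟨Pi.single i 1, by simp [Pi.single_apply, Finset.mem_coe.mp hi]⟩
  | zero => exact ⟨0, by simp⟩
  | add m m' _ _ hx hx' =>
    obtain ⟨x, rfl⟩ := hx
    obtain ⟨x', rfl⟩ := hx'
    exact ⟨x + x', by simp [add_mul, sum_add_distrib]⟩

theorem frobSet_bddAbove (h : ℕ) (A : Finset κ) (a : κ → ℕ) : BddAbove (frobSet h A a) := by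
  obtain ⟨N, hN⟩ := Nat.exists_mem_closure_of_ge (a '' A)
  refine ⟨N, fun z hz => ?_⟩
  obtain ⟨hdvd, hnot⟩ := hz
  by_contra! hlt
  lift z to ℕ using by omega
  have hgcd : Nat.setGcd (a '' A) ∣ Nat.lcm (A.gcd a) h :=
    (dvd_gcd fun i hi => Nat.setGcd_dvd_of_mem (Set.mem_image_of_mem a hi)).trans
      (Nat.dvd_lcm_left _ _)
  obtain ⟨x, hx⟩ := exists_sum_mul_eq_of_mem_closure
    (hN z (by omega) (hgcd.trans (Int.natCast_dvd_natCast.mp hdvd)))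
  exact hnot ⟨x, by rw [hx]⟩

theorem neg_lcm_mem_frobSet {h : ℕ} {A : Finset κ} {a : κ → ℕ} (hg : A.gcd a ≠ 0) (hh : h ≠ 0) :
    -((Nat.lcm (A.gcd a) h : ℕ) : ℤ) ∈ frobSet h A a := by
  have hpos : 0 < Nat.lcm (A.gcd a) h := Nat.pos_of_ne_zero (Nat.lcm_ne_zero hg hh)
  refine ⟨dvd_neg.mpr dvd_rfl, fun ⟨x, hx⟩ => ?_⟩
  have : (0 : ℤ) ≤ ((∑ i ∈ A, x i * a i : ℕ) : ℤ) := Int.natCast_nonneg _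
  omega

end Frobenius

theorem sum_extend_mul {κ κ' : Type*} [Fintype κ] [Fintype κ'] (e : κ' ↪ κ) (x : κ' → ℕ)
    (a : κ → ℕ) : ∑ i, Function.extend e x 0 i * a i = ∑ i, x i * a (e i) := by
  classical
  rw [← sum_subset (subset_univ (univ.map e)), sum_map]
  · simp [e.injective.extend_apply]
  · intro i _ hi
    rw [Function.extend_apply' _ _ _ (by simpa using hi), Pi.zero_apply, zero_mul]

section Quotient

variable {ι κ ι' κ' : Type*} {d : ι → ℕ} {a : κ → ℕ} {d' : ι' → ℕ} {a' : κ' → ℕ} {p : ℕ}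
  {eD : ι' ↪ ι} {eA : κ' ↪ κ}

theorem deltaOn_map_eq_mul [Fintype ι'] [Fintype κ'] (hd : ∀ j, d (eD j) = p * d' j)
    (ha : ∀ i, a (eA i) = p * a' i) :
    deltaOn (univ.map eD) d (univ.map eA) a = p * deltaPair d' a' := by
  simp only [deltaOn, deltaPair, sum_map, hd, ha, Nat.cast_mul, ← mul_sum]
  ring

theorem gcd_map_eq_mul (ha : ∀ i, a (eA i) = p * a' i) (I : Finset κ') :
    (I.map eA).gcd a = p * I.gcd a' := by
  classical
  rw [map_eq_image, gcd_image, Function.comp_def]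
  simp only [ha, Finset.gcd_mul_left, normalize_eq]

theorem IsHRegularPair.of_map_eq_mul [Fintype ι] [Fintype κ] [Fintype ι'] [Fintype κ'] {h : ℕ}
    (hp : p ≠ 0) (hreg : IsHRegularPair (p * h) d a) (hd : ∀ j, d (eD j) = p * d' j)
    (ha : ∀ i, a (eA i) = p * a' i) (hD : ∀ j, p ∣ d j → j ∈ univ.map eD) :
    IsHRegularPair h d' a' := by
  intro I _ hI hgcd
  have hgcd_map := gcd_map_eq_mul ha I
  have hgcd_lt : 1 < (I.map eA).gcd a := by
    rw [hgcd_map]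
    exact hgcd.trans_le (Nat.le_mul_of_pos_left _ (Nat.pos_of_ne_zero hp))
  rcases hreg (I.map eA) (subset_univ _) hI.map hgcd_lt with ⟨P, -, hPcard, hPdvd⟩ | hdvd
  · left
    classical
    have hP : (univ.filter (fun j => eD j ∈ P)).map eD = P := by
      ext j
      simp only [mem_map, mem_filter, mem_univ, true_and]
      refine ⟨fun ⟨j', hj', hj⟩ => hj ▸ hj', fun hj => ?_⟩
      have hpj : p ∣ d j := (hgcd_map ▸ dvd_mul_right p _).trans (hPdvd j hj)
      obtain ⟨j', -, rfl⟩ := mem_map.mp (hD j hpj)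
      exact ⟨j', hj, rfl⟩
    refine ⟨univ.filter (fun j => eD j ∈ P), subset_univ _, ?_, fun j hj => ?_⟩
    · rw [← card_map eD, hP, hPcard, card_map]
    · have hdvd := hPdvd _ (mem_filter.mp hj).2
      rw [hgcd_map, hd] at hdvd
      exact Nat.dvd_of_mul_dvd_mul_left (Nat.pos_of_ne_zero hp) hdvd
  · right
    rw [hgcd_map] at hdvd
    exact Nat.dvd_of_mul_dvd_mul_left (Nat.pos_of_ne_zero hp) hdvd

theorem frobNum_mul_le [Fintype κ] [Fintype κ'] {h : ℕ} (hp : p ≠ 0) (hh : h ≠ 0)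
    (hg : univ.gcd a ≠ 0) (ha : ∀ i, a (eA i) = p * a' i) (hg' : univ.gcd a' ∣ h) :
    frobNum (p * h) a ≤ p * frobNum h a' := by
  rw [frobNum, frobOn_eq_sSup]
  refine csSup_le ⟨_, neg_lcm_mem_frobSet hg (mul_ne_zero hp hh)⟩ fun z hz => ?_
  obtain ⟨hzdvd, hznot⟩ := hz
  obtain ⟨w, rfl⟩ : ((p * h : ℕ) : ℤ) ∣ z :=
    (Int.natCast_dvd_natCast.mpr (Nat.dvd_lcm_right _ _)).trans hzdvd
  have hw : (h : ℤ) * w ∈ frobSet h univ a' := by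
    refine ⟨(Int.natCast_dvd_natCast.mpr (Nat.lcm_dvd hg' dvd_rfl)).trans
      (dvd_mul_right _ _), ?_⟩
    rintro ⟨x, hx⟩
    refine hznot ⟨Function.extend eA x 0, ?_⟩
    simp only [sum_extend_mul, ha, mul_left_comm _ p, ← mul_sum, Nat.cast_mul, hx]
    ring
  calc ((p * h : ℕ) : ℤ) * w = p * (h * w) := by push_cast; ring
    _ ≤ p * frobNum h a' :=
      mul_le_mul_of_nonneg_left (le_csSup (frobSet_bddAbove _ _ _) hw) (Int.natCast_nonneg p)

end Quotient

namespace IsHRegularPair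

variable {ι κ : Type*} [Fintype ι] [Fintype κ] {h : ℕ} {d : ι → ℕ} {a : κ → ℕ}

theorem exists_dvd (hreg : IsHRegularPair h d a) {i : κ} (ha : 0 < a i) (hi : ¬ a i ∣ h) :
    ∃ j, a i ∣ d j := by
  have hgcd : 1 < ({i} : Finset κ).gcd a := by
    rw [gcd_singleton, normalize_eq]
    by_contra! hle
    exact hi (by rw [show a i = 1 by omega]; exact one_dvd h)
  rcases hreg {i} (subset_univ _) (singleton_nonempty i) hgcd with ⟨P, -, hP, hPd⟩ | hdvd
  · obtain ⟨j, hj⟩ := card_pos.mp (by rw [hP, card_singleton]; exact one_pos)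
    exact ⟨j, by simpa using hPd j hj⟩
  · exact absurd (by simpa using hdvd) hi

theorem gcd_dvd_of_card_lt (hreg : IsHRegularPair h d a) {A : Finset κ} {p : ℕ} (hp : 1 < p)
    (hpA : ∀ i ∈ A, p ∣ a i) (hA : A.gcd a ≠ 0)
    (hcard : (univ.filter (fun j => p ∣ d j)).card < A.card) : A.gcd a ∣ h := by
  have hpg : p ∣ A.gcd a := dvd_gcd hpA
  have hgcd : 1 < A.gcd a := hp.trans_le (Nat.le_of_dvd (Nat.pos_of_ne_zero hA) hpg)
  rcases hreg A (subset_univ _) (card_pos.mp (by omega)) hgcd with ⟨P, -, hP, hPd⟩ | hdvd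
  · have hPsub : P ⊆ univ.filter (fun j => p ∣ d j) := fun j hj =>
      mem_filter.mpr ⟨mem_univ _, hpg.trans (hPd j hj)⟩
    have := card_le_card hPsub
    omega
  · exact hdvd

end IsHRegularPair

theorem Finset.exists_fin_embedding_map_univ {α : Type*} (s : Finset α) {k : ℕ}
    (hk : s.card = k) : ∃ e : Fin k ↪ α, univ.map e = s := by
  refine ⟨(Fintype.equivFinOfCardEq (by simpa using hk)).symm.toEmbedding.trans
    (Function.Embedding.subtype (· ∈ s)), ?_⟩
  rw [← map_map, map_univ_equiv, univ_eq_attach, attach_map_val]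

theorem exists_fin_embedding_map_univ_of_dvd {ι : Type*} (D : Finset ι) (d : ι → ℕ) {p : ℕ}
    (hD : ∀ j ∈ D, p ∣ d j) {k : ℕ} (hk : D.card = k) :
    ∃ (e : Fin k ↪ ι) (d' : Fin k → ℕ), univ.map e = D ∧ ∀ j, d (e j) = p * d' j := by
  obtain ⟨e, he⟩ := D.exists_fin_embedding_map_univ hk
  exact ⟨e, fun j => d (e j) / p, he,
    fun j => (Nat.mul_div_cancel' (hD _ (he ▸ mem_map_of_mem e (mem_univ j)))).symm⟩

theorem reduction_lemma_ii_general (h c : ℕ)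
    (IH : ∀ (h' c' n' : ℕ), 0 < h' → h' < h → 1 ≤ c' → c' ≤ c → c' ≤ n' →
      ∀ (d' : Fin c' → ℕ) (a' : Fin (n' + 1) → ℕ),
        (∀ j, 0 < d' j) → (∀ i, 0 < a' i) → IsHRegularPair h' d' a' →
        (∀ i, ¬ a' i ∣ h') → deltaPair d' a' ≥ frobNum h' a')
    (n : ℕ)
    (d : Fin c → ℕ) (a : Fin (n + 1) → ℕ)
    (hd : ∀ j, 0 < d j) (ha : ∀ i, 0 < a i)
    (hreg : IsHRegularPair h d a) (hnd : ∀ i, ¬ a i ∣ h)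
    (p : ℕ) (hp : p.Prime) (hph : p ∣ h)
    (hdelta : 0 ≤ deltaPair d a
        - deltaOn (Finset.univ.filter (fun j => p ∣ d j)) d
            (Finset.univ.filter (fun i => p ∣ a i)) a)
    (hcard : (Finset.univ.filter (fun j => p ∣ d j)).card
        < (Finset.univ.filter (fun i : Fin (n + 1) => p ∣ a i)).card) :
    deltaPair d a ≥ frobNum h a := by
  obtain ⟨h', rfl⟩ := hph
  set D := univ.filter (fun j => p ∣ d j)
  set A := univ.filter (fun i => p ∣ a i)
  obtain ⟨i₀, hi₀⟩ : A.Nonempty := card_pos.mp (by omega)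
  have hh' : 0 < h' := Nat.pos_of_ne_zero fun h0 => hnd i₀ (by simp [h0])
  obtain ⟨j₀, hj₀⟩ := hreg.exists_dvd (ha i₀) (hnd i₀)
  have hD : 0 < D.card :=
    card_pos.mpr ⟨j₀, mem_filter.mpr ⟨mem_univ _, (mem_filter.mp hi₀).2.trans hj₀⟩⟩
  obtain ⟨eD, d', heD, hdd'⟩ :=
    exists_fin_embedding_map_univ_of_dvd D d (fun j hj => (mem_filter.mp hj).2) rfl
  obtain ⟨eA, a', heA, haa'⟩ := exists_fin_embedding_map_univ_of_dvd A a
    (fun i hi => (mem_filter.mp hi).2) (Nat.sub_one_add_one (card_pos.mpr ⟨i₀, hi₀⟩).ne').symm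
  have hgA : A.gcd a ∣ p * h' := hreg.gcd_dvd_of_card_lt hp.one_lt
    (fun i hi => (mem_filter.mp hi).2) (gcd_ne_zero_iff.mpr ⟨i₀, hi₀, (ha i₀).ne'⟩) hcard
  have hg' : univ.gcd a' ∣ h' := by
    rw [← heA, gcd_map_eq_mul haa'] at hgA
    exact Nat.dvd_of_mul_dvd_mul_left hp.pos hgA
  have hreg' : IsHRegularPair h' d' a' := hreg.of_map_eq_mul hp.ne_zero hdd' haa'
    fun j hj => by rw [heD]; exact mem_filter.mpr ⟨mem_univ j, hj⟩
  have hIH := IH h' D.card (A.card - 1) hh' (lt_mul_left hh' hp.one_lt) hD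
    ((card_le_univ D).trans_eq (Fintype.card_fin c)) (by omega) d' a'
    (fun j => pos_of_mul_pos_right (hdd' j ▸ hd (eD j)) p.zero_le)
    (fun i => pos_of_mul_pos_right (haa' i ▸ ha (eA i)) p.zero_le) hreg'
    (fun i hi => hnd (eA i) (haa' i ▸ mul_dvd_mul_left p hi))
  have hg : univ.gcd a ≠ 0 := gcd_ne_zero_iff.mpr ⟨i₀, mem_univ _, (ha i₀).ne'⟩
  calc frobNum (p * h') a
      ≤ p * frobNum h' a' := frobNum_mul_le hp.ne_zero hh'.ne' hg haa' hg'
    _ ≤ p * deltaPair d' a' := by gcongr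
    _ = deltaOn D d A a := by rw [← deltaOn_map_eq_mul hdd' haa', heD, heA]
    _ ≤ deltaPair d a := by linarith

/-- **Lemma 4.9(ii) (reduction to smaller regularity index).**
Assume Conjecture 4.11 holds for all `h'`-regular pairs of codimension at most `c` with
`h' < h`.  If `(d;a)` is an `h`-regular pair with `c ≤ n`, `aᵢ ∤ h` for all `i`, and
there is a prime `p ∣ h` with `δ̄(p) := δ(d;a) - δ(d(p);a(p)) ≥ 0` and
`|d(p)| < |a(p)|`, then `δ(d;a) ≥ F^h(a₀,…,aₙ)`. -/
theorem reduction_lemma_ii (h c : ℕ) (hh : 2 ≤ h) (hc : 1 ≤ c)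
    (IH : ∀ (h' c' n' : ℕ), 0 < h' → h' < h → 1 ≤ c' → c' ≤ c → c' ≤ n' →
      ∀ (d' : Fin c' → ℕ) (a' : Fin (n' + 1) → ℕ),
        (∀ j, 0 < d' j) → (∀ i, 0 < a' i) → IsHRegularPair h' d' a' →
        (∀ i, ¬ a' i ∣ h') → deltaPair d' a' ≥ frobNum h' a')
    (n : ℕ) (hcn : c ≤ n)
    (d : Fin c → ℕ) (a : Fin (n + 1) → ℕ)
    (hd : ∀ j, 0 < d j) (ha : ∀ i, 0 < a i)
    (hreg : IsHRegularPair h d a) (hnd : ∀ i, ¬ a i ∣ h)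
    (p : ℕ) (hp : p.Prime) (hph : p ∣ h)
    (hdelta : 0 ≤ deltaPair d a
        - deltaOn (Finset.univ.filter (fun j => p ∣ d j)) d
            (Finset.univ.filter (fun i => p ∣ a i)) a)
    (hcard : (Finset.univ.filter (fun j => p ∣ d j)).card
        < (Finset.univ.filter (fun i : Fin (n + 1) => p ∣ a i)).card) :
    deltaPair d a ≥ frobNum h a :=
  reduction_lemma_ii_general h c IH n d a hd ha hreg hnd p hp hph hdelta hcard
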